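/- arXiv:1305.7009 — 3 statements merged into one kernel-verified Lean document; each statement's English description precedes it below -/
import Mathlib

section
/- There exist η ∈ (2/3, √3−1], unit vectors n₁, n₂, n₃ ∈ ℝ³ with n_i·n_j = −1/2 for all i ≠ j (trine spin axes), pairwise joint measurements G^{ij} of the noisy spin-1/2 observables along n_i and n_j with sharpness η for each of the three pairs, and a qubit density matrix ρ, such that R₃(ρ) > 1 − η/3. (State-dependent violation of the LSW inequality by a qubit.) -/
open Matrix ComplexOrder

noncomputable section

abbrev Mat2 := Matrix (Fin 2) (Fin 2) ℂ

/-- Pauli matrix σ₁. -/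
def σ1 : Mat2 := !![0, 1; 1, 0]
/-- Pauli matrix σ₂. -/
def σ2 : Mat2 := !![0, -Complex.I; Complex.I, 0]
/-- Pauli matrix σ₃. -/
def σ3 : Mat2 := !![1, 0; 0, -1]

/-- σ·a for a real 3-vector a. -/
def pauli (a : Fin 3 → ℝ) : Mat2 := (a 0 : ℂ) • σ1 + (a 1 : ℂ) • σ2 + (a 2 : ℂ) • σ3

/-- Euclidean inner product on ℝ³. -/
def dot3 (a b : Fin 3 → ℝ) : ℝ := a 0 * b 0 + a 1 * b 1 + a 2 * b 2

/-- Euclidean norm on ℝ³. -/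
def norm3 (a : Fin 3 → ℝ) : ℝ := Real.sqrt (dot3 a a)

/-- A qubit effect: both `E` and `I - E` positive semidefinite. -/
def IsEffect (E : Mat2) : Prop := E.PosSemidef ∧ (1 - E).PosSemidef

/-- A qubit density matrix. -/
def IsDensity (ρ : Mat2) : Prop := ρ.PosSemidef ∧ ρ.trace = 1

/-- E₊ = (1/2)(I + η σ·n). -/
def Epos (η : ℝ) (n : Fin 3 → ℝ) : Mat2 := (1/2 : ℂ) • (1 + (η : ℂ) • pauli n)
/-- E₋ = (1/2)(I - η σ·n). -/
def Eneg (η : ℝ) (n : Fin 3 → ℝ) : Mat2 := (1/2 : ℂ) • (1 - (η : ℂ) • pauli n)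

/-- A pairwise joint measurement of the noisy spin-1/2 observables along nᵢ and nⱼ. -/
def IsJointMmt (η : ℝ) (ni nj : Fin 3 → ℝ) (Gpp Gpm Gmp Gmm : Mat2) : Prop :=
  IsEffect Gpp ∧ IsEffect Gpm ∧ IsEffect Gmp ∧ IsEffect Gmm ∧
  Gpp + Gpm = Epos η ni ∧ Gmp + Gmm = Eneg η ni ∧
  Gpp + Gmp = Epos η nj ∧ Gpm + Gmm = Eneg η nj

/-- Average anticorrelation probability R₃(ρ), given the anticorrelation effects of the
three pairwise joint measurements. -/
def R3 (ρ G12pm G12mp G13pm G13mp G23pm G23mp : Mat2) : ℝ :=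
  (1/3) * ((ρ * (G12pm + G12mp)).trace.re + (ρ * (G13pm + G13mp)).trace.re +
    (ρ * (G23pm + G23mp)).trace.re)

/-- Parametric joint-measurement family. -/
def Gpp (η : ℝ) (ni nj : Fin 3 → ℝ) (α : ℝ) (a : Fin 3 → ℝ) : Mat2 :=
  (1/2 : ℂ) • (((α/2 : ℝ) : ℂ) • (1 : Mat2) + pauli ((1/2 : ℝ) • (η • (ni + nj) - a)))
def Gpm (η : ℝ) (ni nj : Fin 3 → ℝ) (α : ℝ) (a : Fin 3 → ℝ) : Mat2 :=
  (1/2 : ℂ) • (((1 - α/2 : ℝ) : ℂ) • (1 : Mat2) + pauli ((1/2 : ℝ) • (η • (ni - nj) + a)))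
def Gmp (η : ℝ) (ni nj : Fin 3 → ℝ) (α : ℝ) (a : Fin 3 → ℝ) : Mat2 :=
  (1/2 : ℂ) • (((1 - α/2 : ℝ) : ℂ) • (1 : Mat2) + pauli ((1/2 : ℝ) • (-(η • ni) + η • nj + a)))
def Gmm (η : ℝ) (ni nj : Fin 3 → ℝ) (α : ℝ) (a : Fin 3 → ℝ) : Mat2 :=
  (1/2 : ℂ) • (((α/2 : ℝ) : ℂ) • (1 : Mat2) + pauli ((1/2 : ℝ) • (-(η • (ni + nj)) - a)))

/-- Trine directions in the ZX plane. -/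
def tn1 : Fin 3 → ℝ := ![0, 0, 1]
def tn2 : Fin 3 → ℝ := ![Real.sqrt 3 / 2, 0, -(1/2)]
def tn3 : Fin 3 → ℝ := ![-(Real.sqrt 3 / 2), 0, -(1/2)]

/-- sign of a Boolean, as ±1. -/
def sgn (b : Bool) : ℝ := if b then 1 else -1

/-- m_X = Σₖ Xₖ nₖ. -/
def mvec {N : ℕ} (n : Fin N → Fin 3 → ℝ) (X : Fin N → Bool) : Fin 3 → ℝ :=
  ∑ k, sgn (X k) • n k

/-- Joint measurability of the N noisy qubit observables. -/
def JointlyMeasurable {N : ℕ} (η : ℝ) (n : Fin N → Fin 3 → ℝ) : Prop :=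
  ∃ E : (Fin N → Bool) → Mat2,
    (∀ X, IsEffect (E X)) ∧ (∑ X, E X) = 1 ∧
    (∀ k, ∑ X ∈ Finset.univ.filter (fun X => X k = true), E X = Epos η (n k)) ∧
    (∀ k, ∑ X ∈ Finset.univ.filter (fun X => X k = false), E X = Eneg η (n k))

/-!
Since `(σ·v)² = |v|² I`, the matrix `c I + σ·v` is positive semidefinite exactly when `|v| ≤ c`.
For trine axes and a vector `a` orthogonal to their plane, the family `Gpp … Gmm` is therefore
a joint measurement as soon as `η² + |a|² ≤ α²` and `3η² + |a|² ≤ (2 - α)²`. Its anticorrelation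
effect is `(1 - α/2) I + σ·a/2`, whose expectation in the eigenstate of `σ·a/|a|` is
`1 - α/2 + |a|/2`; `η = 17/25`, `α = 37/50`, `|a| = 29/100` give `31/40 > 1 - η/3 = 58/75`.
-/

lemma posSemidef_of_normSq_le {p r : ℝ} {q : ℂ} (hp : 0 ≤ p) (hr : 0 ≤ r)
    (hq : Complex.normSq q ≤ p * r) :
    (!![(p : ℂ), q; star q, (r : ℂ)]).PosSemidef := by
  refine Matrix.PosSemidef.of_dotProduct_mulVec_nonneg ?_ fun x => ?_
  · ext i j
    fin_cases i <;> fin_cases j <;> simp [Matrix.conjTranspose_apply]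
  have hform : star x ⬝ᵥ (!![(p : ℂ), q; star q, (r : ℂ)] *ᵥ x)
      = ((p * Complex.normSq (x 0) + r * Complex.normSq (x 1)
          + 2 * (q * star (x 0) * x 1).re : ℝ) : ℂ) := by
    simp only [dotProduct, mulVec, Fin.sum_univ_two, Complex.ext_iff]
    simp [Complex.normSq_apply, Complex.mul_re, Complex.mul_im]
    constructor <;> ring
  rw [hform, Complex.zero_le_real]
  have hre : -(‖q‖ * ‖x 0‖ * ‖x 1‖) ≤ (q * star (x 0) * x 1).re := by
    have := Complex.abs_re_le_norm (q * star (x 0) * x 1)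
    rw [norm_mul, norm_mul, norm_star] at this
    linarith [abs_le.mp this]
  have hq' : ‖q‖ ^ 2 ≤ p * r := by rwa [← Complex.normSq_eq_norm_sq]
  rw [Complex.normSq_eq_norm_sq, Complex.normSq_eq_norm_sq]
  set A := ‖x 0‖
  set B := ‖x 1‖
  have hS : 0 ≤ p * A ^ 2 + r * B ^ 2 := by positivity
  -- `(p A² + r B²)² = (p A² - r B²)² + 4 p r A² B² ≥ (2 ‖q‖ A B)²`
  have hsq : (2 * (‖q‖ * A * B)) ^ 2 ≤ (p * A ^ 2 + r * B ^ 2) ^ 2 := by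
    nlinarith [sq_nonneg (p * A ^ 2 - r * B ^ 2), mul_nonneg (sub_nonneg.2 hq') (sq_nonneg (A * B))]
  have := (pow_le_pow_iff_left₀ (by positivity) hS two_ne_zero).1 hsq
  linarith

lemma pauli_add (v w : Fin 3 → ℝ) : pauli (v + w) = pauli v + pauli w := by
  simp only [pauli, Pi.add_apply, Complex.ofReal_add]; module

lemma pauli_smul (s : ℝ) (v : Fin 3 → ℝ) : pauli (s • v) = (s : ℂ) • pauli v := by
  simp only [pauli, Pi.smul_apply, smul_eq_mul, Complex.ofReal_mul]; module

lemma pauli_neg (v : Fin 3 → ℝ) : pauli (-v) = -pauli v := by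
  simpa using pauli_smul (-1) v

lemma pauli_sub (v w : Fin 3 → ℝ) : pauli (v - w) = pauli v - pauli w := by
  rw [sub_eq_add_neg, pauli_add, pauli_neg, sub_eq_add_neg]

lemma dot3_smul_smul (s : ℝ) (v : Fin 3 → ℝ) : dot3 (s • v) (s • v) = s ^ 2 * dot3 v v := by
  simp only [dot3, Pi.smul_apply, smul_eq_mul]; ring

lemma smul_one_add_pauli_eq (c : ℝ) (v : Fin 3 → ℝ) :
    (c : ℂ) • (1 : Mat2) + pauli v
      = !![((c + v 2 : ℝ) : ℂ), (v 0 : ℂ) - (v 1 : ℂ) * Complex.I;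
           star ((v 0 : ℂ) - (v 1 : ℂ) * Complex.I), ((c - v 2 : ℝ) : ℂ)] := by
  ext i j
  fin_cases i <;> fin_cases j <;> simp [pauli, σ1, σ2, σ3, sub_eq_add_neg]

lemma posSemidef_smul_one_add_pauli {c : ℝ} {v : Fin 3 → ℝ} (hc : 0 ≤ c)
    (hv : dot3 v v ≤ c ^ 2) : ((c : ℂ) • (1 : Mat2) + pauli v).PosSemidef := by
  rw [dot3] at hv
  obtain ⟨hlo, hhi⟩ :=
    abs_le_of_sq_le_sq' (a := v 2) (by nlinarith [sq_nonneg (v 0), sq_nonneg (v 1)]) hc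
  rw [smul_one_add_pauli_eq]
  refine posSemidef_of_normSq_le (by linarith) (by linarith) ?_
  have : Complex.normSq ((v 0 : ℂ) - (v 1 : ℂ) * Complex.I) = v 0 ^ 2 + v 1 ^ 2 := by
    simp [Complex.normSq_apply]; ring
  rw [this]
  nlinarith

lemma isEffect_half_smul_one_add_pauli {c : ℝ} {v : Fin 3 → ℝ} (hc0 : 0 ≤ c) (hc2 : c ≤ 2)
    (hv : dot3 v v ≤ c ^ 2) (hv' : dot3 v v ≤ (2 - c) ^ 2) :
    IsEffect ((1/2 : ℂ) • ((c : ℂ) • (1 : Mat2) + pauli v)) := by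
  constructor
  · have h : (1/2 : ℂ) • ((c : ℂ) • (1 : Mat2) + pauli v)
        = ((c / 2 : ℝ) : ℂ) • 1 + pauli ((1/2 : ℝ) • v) := by
      rw [pauli_smul]; push_cast; module
    rw [h]
    exact posSemidef_smul_one_add_pauli (by linarith) (by rw [dot3_smul_smul]; nlinarith)
  · have h : 1 - (1/2 : ℂ) • ((c : ℂ) • (1 : Mat2) + pauli v)
        = (((2 - c) / 2 : ℝ) : ℂ) • 1 + pauli ((-1/2 : ℝ) • v) := by
      rw [pauli_smul]; push_cast; module
    rw [h]
    exact posSemidef_smul_one_add_pauli (by linarith) (by rw [dot3_smul_smul]; nlinarith)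

lemma trace_pauli (v : Fin 3 → ℝ) : (pauli v).trace = 0 := by
  simp [pauli, σ1, σ2, σ3, Matrix.trace, Fin.sum_univ_two]

lemma trace_pauli_mul_pauli (u v : Fin 3 → ℝ) : (pauli u * pauli v).trace = 2 * dot3 u v := by
  simp [pauli, σ1, σ2, σ3, dot3, Matrix.trace, Fin.sum_univ_two, Complex.ext_iff]
  constructor <;> ring

lemma isDensity_half_one_add_pauli {s : Fin 3 → ℝ} (hs : dot3 s s ≤ 1) :
    IsDensity ((1/2 : ℂ) • (1 + pauli s)) := by
  refine ⟨?_, ?_⟩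
  · simpa using (isEffect_half_smul_one_add_pauli (c := 1) zero_le_one one_le_two
      (by rwa [one_pow]) (by norm_num [hs])).1
  · simp [trace_pauli]

lemma re_trace_half_one_add_pauli_mul (s v : Fin 3 → ℝ) (c : ℝ) :
    ((1/2 : ℂ) • (1 + pauli s) * ((c : ℂ) • (1 : Mat2) + pauli v)).trace.re = c + dot3 s v := by
  simp [mul_add, add_mul, trace_pauli, trace_pauli_mul_pauli]

section JointFamily

variable (η α : ℝ) (ni nj a : Fin 3 → ℝ)

lemma Gpp_add_Gpm : Gpp η ni nj α a + Gpm η ni nj α a = Epos η ni := by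
  simp only [Gpp, Gpm, Epos, pauli_smul, pauli_add, pauli_sub]; push_cast; module

lemma Gmp_add_Gmm : Gmp η ni nj α a + Gmm η ni nj α a = Eneg η ni := by
  simp only [Gmp, Gmm, Eneg, pauli_smul, pauli_add, pauli_sub, pauli_neg]; push_cast; module

lemma Gpp_add_Gmp : Gpp η ni nj α a + Gmp η ni nj α a = Epos η nj := by
  simp only [Gpp, Gmp, Epos, pauli_smul, pauli_add, pauli_sub, pauli_neg]; push_cast; module

lemma Gpm_add_Gmm : Gpm η ni nj α a + Gmm η ni nj α a = Eneg η nj := by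
  simp only [Gpm, Gmm, Eneg, pauli_smul, pauli_add, pauli_sub, pauli_neg]; push_cast; module

lemma Gpm_add_Gmp :
    Gpm η ni nj α a + Gmp η ni nj α a = ((1 - α / 2 : ℝ) : ℂ) • 1 + pauli ((1/2 : ℝ) • a) := by
  simp only [Gpm, Gmp, pauli_smul, pauli_add, pauli_sub, pauli_neg]; push_cast; module

variable {η α ni nj a}

lemma isJointMmt_family (hα0 : 0 ≤ α) (hα2 : α ≤ 2)
    (hpp : dot3 (η • (ni + nj) - a) (η • (ni + nj) - a) ≤ α ^ 2)
    (hmm : dot3 (-(η • (ni + nj)) - a) (-(η • (ni + nj)) - a) ≤ α ^ 2)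
    (hpm : dot3 (η • (ni - nj) + a) (η • (ni - nj) + a) ≤ (2 - α) ^ 2)
    (hmp : dot3 (-(η • ni) + η • nj + a) (-(η • ni) + η • nj + a) ≤ (2 - α) ^ 2) :
    IsJointMmt η ni nj (Gpp η ni nj α a) (Gpm η ni nj α a) (Gmp η ni nj α a) (Gmm η ni nj α a) := by
  refine ⟨?_, ?_, ?_, ?_, Gpp_add_Gpm .., Gmp_add_Gmm .., Gpp_add_Gmp .., Gpm_add_Gmm ..⟩ <;>
    refine isEffect_half_smul_one_add_pauli (by linarith) (by linarith) ?_ ?_ <;>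
    rw [dot3_smul_smul] <;> nlinarith

end JointFamily

lemma isJointMmt_family_of_orthogonal {η α d : ℝ} {ni nj a : Fin 3 → ℝ}
    (hi : dot3 ni ni = 1) (hj : dot3 nj nj = 1) (hij : dot3 ni nj = d)
    (hai : dot3 a ni = 0) (haj : dot3 a nj = 0) (hα0 : 0 ≤ α) (hα2 : α ≤ 2)
    (hsum : η ^ 2 * (2 + 2 * d) + dot3 a a ≤ α ^ 2)
    (hdiff : η ^ 2 * (2 - 2 * d) + dot3 a a ≤ (2 - α) ^ 2) :
    IsJointMmt η ni nj (Gpp η ni nj α a) (Gpm η ni nj α a) (Gmp η ni nj α a) (Gmm η ni nj α a) := by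
  simp only [dot3] at *
  refine isJointMmt_family hα0 hα2 ?_ ?_ ?_ ?_ <;>
    simp only [dot3, Pi.add_apply, Pi.sub_apply, Pi.neg_apply, Pi.smul_apply, smul_eq_mul]
  · linear_combination hsum + η ^ 2 * hi + η ^ 2 * hj + 2 * η ^ 2 * hij - 2 * η * hai - 2 * η * haj
  · linear_combination hsum + η ^ 2 * hi + η ^ 2 * hj + 2 * η ^ 2 * hij + 2 * η * hai + 2 * η * haj
  · linear_combination hdiff + η ^ 2 * hi + η ^ 2 * hj - 2 * η ^ 2 * hij + 2 * η * hai - 2 * η * haj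
  · linear_combination hdiff + η ^ 2 * hi + η ^ 2 * hj - 2 * η ^ 2 * hij - 2 * η * hai + 2 * η * haj

lemma trine_gram :
    dot3 tn1 tn1 = 1 ∧ dot3 tn2 tn2 = 1 ∧ dot3 tn3 tn3 = 1 ∧
    dot3 tn1 tn2 = -(1/2) ∧ dot3 tn1 tn3 = -(1/2) ∧ dot3 tn2 tn3 = -(1/2) := by
  have h3 : Real.sqrt 3 * Real.sqrt 3 = 3 := Real.mul_self_sqrt (by norm_num)
  refine ⟨?_, ?_, ?_, ?_, ?_, ?_⟩ <;> simp [dot3, tn1, tn2, tn3] <;> linarith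

lemma dot3_trine_of_perp (b : ℝ) :
    dot3 ![0, b, 0] tn1 = 0 ∧ dot3 ![0, b, 0] tn2 = 0 ∧ dot3 ![0, b, 0] tn3 = 0 := by
  simp [dot3, tn1, tn2, tn3]

/-- State-dependent violation of the LSW inequality by a qubit: there are a sharpness
η ∈ (2/3, √3 - 1], trine spin axes, pairwise joint measurements for the three pairs,
and a qubit state ρ with R₃(ρ) > 1 - η/3. -/
theorem state_dependent_violation :
    ∃ η : ℝ, η ∈ Set.Ioc (2/3 : ℝ) (Real.sqrt 3 - 1) ∧
    ∃ n₁ n₂ n₃ : Fin 3 → ℝ,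
      norm3 n₁ = 1 ∧ norm3 n₂ = 1 ∧ norm3 n₃ = 1 ∧
      dot3 n₁ n₂ = -(1/2) ∧ dot3 n₁ n₃ = -(1/2) ∧ dot3 n₂ n₃ = -(1/2) ∧
    ∃ G12pp G12pm G12mp G12mm G13pp G13pm G13mp G13mm G23pp G23pm G23mp G23mm : Mat2,
      IsJointMmt η n₁ n₂ G12pp G12pm G12mp G12mm ∧
      IsJointMmt η n₁ n₃ G13pp G13pm G13mp G13mm ∧
      IsJointMmt η n₂ n₃ G23pp G23pm G23mp G23mm ∧
    ∃ ρ : Mat2, IsDensity ρ ∧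
      R3 ρ G12pm G12mp G13pm G13mp G23pm G23mp > 1 - η / 3 := by
  obtain ⟨h11, h22, h33, h12, h13, h23⟩ := trine_gram
  obtain ⟨ha1, ha2, ha3⟩ := dot3_trine_of_perp (29/100)
  have joint {ni nj : Fin 3 → ℝ} (hi : dot3 ni ni = 1) (hj : dot3 nj nj = 1)
      (hij : dot3 ni nj = -(1/2)) (hai : dot3 ![0, 29/100, 0] ni = 0)
      (haj : dot3 ![0, 29/100, 0] nj = 0) :=
    isJointMmt_family_of_orthogonal (η := 17/25) (α := 37/50) hi hj hij hai haj
      (by norm_num) (by norm_num) (by simp [dot3]; norm_num) (by simp [dot3]; norm_num)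
  refine ⟨17/25, ⟨by norm_num, ?_⟩, tn1, tn2, tn3, by rw [norm3, h11, Real.sqrt_one],
    by rw [norm3, h22, Real.sqrt_one], by rw [norm3, h33, Real.sqrt_one], h12, h13, h23,
    _, _, _, _, _, _, _, _, _, _, _, _, joint h11 h22 h12 ha1 ha2, joint h11 h33 h13 ha1 ha3,
    joint h22 h33 h23 ha2 ha3, (1/2 : ℂ) • (1 + pauli ![0, 1, 0]),
    isDensity_half_one_add_pauli (by simp [dot3]), ?_⟩
  · rw [le_sub_iff_add_le, Real.le_sqrt (by norm_num) (by norm_num)]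
    norm_num
  · rw [R3, Gpm_add_Gmp, Gpm_add_Gmp, Gpm_add_Gmp, re_trace_half_one_add_pauli_mul]
    simp [dot3]
    norm_num

end
end

section
/- Fix η ∈ (2/3, √3−1] and the trine directions n₁, n₂, n₃ in the ZX plane. Consider all choices of (α_{12}, a_{12}), (α_{13}, a_{13}), (α_{23}, a_{23}) ∈ ℝ × ℝ³ such that for each pair (ij) the four matrices of the parametric joint-measurement family with parameters (α_{ij}, a_{ij}) are qubit effects. Over all such choices, the quantity 2η + |a_{12} + a_{13} + a_{23}| − (α_{12} + α_{13} + α_{23}) attains its maximum value C(η) = 2η + 3(√(1 + η⁴/4 − 2η²) − (1 − η²/2)), and the maximum is attained at α_{ij} = 1 − η²/2 and a_{ij} = (0, √(1 + η⁴/4 − 2η²), 0) for all three pairs. -/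
open Matrix ComplexOrder

noncomputable section

/-- a(η) = (0, √(1 + η⁴/4 - 2η²), 0). -/
def aopt (η : ℝ) : Fin 3 → ℝ := ![0, Real.sqrt (1 + η^4/4 - 2*η^2), 0]

/-- α(η) = 1 - η²/2. -/
def αopt (η : ℝ) : ℝ := 1 - η^2/2

/-- C(η) = 2η + 3(√(1 + η⁴/4 - 2η²) - (1 - η²/2)). -/
def Cfun (η : ℝ) : ℝ := 2*η + 3*(Real.sqrt (1 + η^4/4 - 2*η^2) - (1 - η^2/2))

/-- All four members of the parametric joint-measurement family are qubit effects. -/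
def FamEffects (η : ℝ) (ni nj : Fin 3 → ℝ) (α : ℝ) (a : Fin 3 → ℝ) : Prop :=
  IsEffect (Gpp η ni nj α a) ∧ IsEffect (Gpm η ni nj α a) ∧
  IsEffect (Gmp η ni nj α a) ∧ IsEffect (Gmm η ni nj α a)

/-!
Write a qubit operator as `½(β I + σ·v)`: it is an effect iff `|v| ≤ β` and `|v| ≤ 2 - β`.
For the pair family this says `|η(nᵢ + nⱼ) ∓ a| ≤ α` and `|η(nᵢ - nⱼ) ± a| ≤ 2 - α`, so by the
parallelogram law `η² + |a|² ≤ α²` and `3η² + |a|² ≤ (2 - α)²` for a trine pair. These force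
`|a|² ≤ 1 + η⁴/4 - 2η²` and then `|a| - α ≤ √(1 + η⁴/4 - 2η²) - (1 - η²/2)`, with equality for
`α = 1 - η²/2` and `a` of maximal length orthogonal to the plane of the trine. Summing the three
pair bounds through the triangle inequality gives `C(η)`, which is attained because the three
optimal `a`'s coincide.
-/

lemma dot3_self_nonneg (a : Fin 3 → ℝ) : 0 ≤ dot3 a a := by
  unfold dot3; nlinarith [mul_self_nonneg (a 0), mul_self_nonneg (a 1), mul_self_nonneg (a 2)]

lemma norm3_eq_norm (a : Fin 3 → ℝ) :
    norm3 a = ‖(WithLp.toLp 2 a : EuclideanSpace ℝ (Fin 3))‖ := by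
  simp [norm3, dot3, EuclideanSpace.norm_eq, Fin.sum_univ_three, sq]

lemma norm3_nonneg (a : Fin 3 → ℝ) : 0 ≤ norm3 a := Real.sqrt_nonneg _

lemma norm3_add_le (a b : Fin 3 → ℝ) : norm3 (a + b) ≤ norm3 a + norm3 b := by
  simpa [norm3_eq_norm] using norm_add_le (WithLp.toLp 2 a : EuclideanSpace ℝ (Fin 3)) _

lemma norm3_smul (c : ℝ) (a : Fin 3 → ℝ) : norm3 (c • a) = |c| * norm3 a := by
  simp [norm3_eq_norm, norm_smul]

lemma norm3_neg (a : Fin 3 → ℝ) : norm3 (-a) = norm3 a := by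
  simp [norm3_eq_norm]

lemma norm3_le_iff {a : Fin 3 → ℝ} {r : ℝ} : norm3 a ≤ r ↔ 0 ≤ r ∧ dot3 a a ≤ r ^ 2 :=
  Real.sqrt_le_iff

lemma sq_norm3 (a : Fin 3 → ℝ) : norm3 a ^ 2 = dot3 a a := Real.sq_sqrt (dot3_self_nonneg a)

lemma dot3_smul_self (c : ℝ) (a : Fin 3 → ℝ) : dot3 (c • a) (c • a) = c ^ 2 * dot3 a a := by
  simp only [dot3, Pi.smul_apply, smul_eq_mul]; ring

lemma dot3_smul_left (c : ℝ) (x a : Fin 3 → ℝ) : dot3 (c • x) a = c * dot3 x a := by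
  simp only [dot3, Pi.smul_apply, smul_eq_mul]; ring

lemma dot3_add_self (x a : Fin 3 → ℝ) :
    dot3 (x + a) (x + a) = dot3 x x + 2 * dot3 x a + dot3 a a := by
  simp only [dot3, Pi.add_apply]; ring

lemma dot3_sub_self (x a : Fin 3 → ℝ) :
    dot3 (x - a) (x - a) = dot3 x x - 2 * dot3 x a + dot3 a a := by
  simp only [dot3, Pi.sub_apply]; ring

lemma norm3_add_sub_le_of_dot3_eq_zero {x a : Fin 3 → ℝ} {r : ℝ} (h : dot3 x a = 0)
    (hr : 0 ≤ r) (hxa : dot3 x x + dot3 a a ≤ r ^ 2) : norm3 (x + a) ≤ r ∧ norm3 (x - a) ≤ r := by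
  simp only [norm3_le_iff, dot3_add_self, dot3_sub_self, h]
  constructor <;> constructor <;> linarith

lemma two_mul_mul_le_of_sq_le {a b k P Q : ℝ} (ha : 0 ≤ a) (hb : 0 ≤ b)
    (hk : k ^ 2 ≤ a * b) : 2 * k * (P * Q) ≤ a * P ^ 2 + b * Q ^ 2 := by
  rcases ha.eq_or_lt with rfl | ha
  · obtain rfl : k = 0 := by nlinarith
    nlinarith
  · refine le_of_mul_le_mul_left ?_ ha
    nlinarith [sq_nonneg (a * P - k * Q), mul_nonneg (sub_nonneg.2 hk) (sq_nonneg Q)]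

lemma posSemidef_fin_two_iff {a b : ℝ} {c : ℂ} :
    (!![(a : ℂ), c; star c, (b : ℂ)]).PosSemidef ↔ 0 ≤ a ∧ 0 ≤ b ∧ ‖c‖ ^ 2 ≤ a * b := by
  constructor
  · intro h
    have ha := h.diag_nonneg (i := 0)
    have hb := h.diag_nonneg (i := 1)
    have hdet := h.det_nonneg
    rw [det_fin_two_of, Complex.star_def, Complex.mul_conj, Complex.normSq_eq_norm_sq,
      ← Complex.ofReal_mul, ← Complex.ofReal_sub] at hdet
    simp only [of_apply, cons_val', cons_val_zero, cons_val_one, empty_val', cons_val_fin_one,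
      Complex.zero_le_real] at ha hb hdet
    exact ⟨ha, hb, by linarith⟩
  · rintro ⟨ha, hb, hc⟩
    refine posSemidef_iff_dotProduct_mulVec.2 ⟨?_, fun x => ?_⟩
    · ext i j
      fin_cases i <;> fin_cases j <;> simp
    have hform : star x ⬝ᵥ (!![(a : ℂ), c; star c, (b : ℂ)] *ᵥ x) =
        ((a * ‖x 0‖ ^ 2 + b * ‖x 1‖ ^ 2 + 2 * (star (x 0) * c * x 1).re : ℝ) : ℂ) := by
      simp only [← Complex.normSq_eq_norm_sq]
      apply Complex.ext <;>
        simp [dotProduct, Fin.sum_univ_two, mulVec, Complex.normSq_apply] <;> ring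
    have hre : -(‖x 0‖ * ‖c‖ * ‖x 1‖) ≤ (star (x 0) * c * x 1).re := by
      have := neg_le_of_abs_le (Complex.abs_re_le_norm (star (x 0) * c * x 1))
      rwa [norm_mul, norm_mul, norm_star] at this
    rw [hform, Complex.zero_le_real]
    nlinarith [two_mul_mul_le_of_sq_le ha hb hc (P := ‖x 0‖) (Q := ‖x 1‖)]

lemma half_bloch_eq (β : ℝ) (v : Fin 3 → ℝ) :
    (1/2 : ℂ) • ((β : ℂ) • (1 : Mat2) + pauli v) =
      !![(((β + v 2) / 2 : ℝ) : ℂ), (v 0 - v 1 * Complex.I) / 2;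
        star ((v 0 - v 1 * Complex.I) / 2), (((β - v 2) / 2 : ℝ) : ℂ)] := by
  ext i j
  fin_cases i <;> fin_cases j <;>
    simp [pauli, σ1, σ2, σ3, div_eq_inv_mul, sub_eq_add_neg]

lemma posSemidef_half_bloch_iff (β : ℝ) (v : Fin 3 → ℝ) :
    ((1/2 : ℂ) • ((β : ℂ) • (1 : Mat2) + pauli v)).PosSemidef ↔ norm3 v ≤ β := by
  have hc : ‖((v 0 : ℂ) - v 1 * Complex.I) / 2‖ ^ 2 = (v 0 ^ 2 + v 1 ^ 2) / 4 := by
    rw [← Complex.normSq_eq_norm_sq, Complex.normSq_apply]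
    simp; ring
  rw [half_bloch_eq, posSemidef_fin_two_iff, hc, norm3_le_iff, dot3]
  constructor
  · rintro ⟨h1, h2, h3⟩
    exact ⟨by linarith, by nlinarith⟩
  · rintro ⟨h1, h2⟩
    refine ⟨?_, ?_, by nlinarith⟩ <;> nlinarith [sq_nonneg (v 0), sq_nonneg (v 1)]

lemma one_sub_half_bloch (β : ℝ) (v : Fin 3 → ℝ) :
    1 - (1/2 : ℂ) • ((β : ℂ) • (1 : Mat2) + pauli v) =
      (1/2 : ℂ) • (((2 - β : ℝ) : ℂ) • (1 : Mat2) + pauli (-v)) := by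
  ext i j
  fin_cases i <;> fin_cases j <;> simp [pauli, σ1, σ2, σ3, Complex.ext_iff] <;> ring

lemma isEffect_half_bloch_iff (β : ℝ) (v : Fin 3 → ℝ) :
    IsEffect ((1/2 : ℂ) • ((β : ℂ) • (1 : Mat2) + pauli v)) ↔
      norm3 v ≤ β ∧ norm3 v ≤ 2 - β := by
  rw [IsEffect, one_sub_half_bloch, posSemidef_half_bloch_iff, posSemidef_half_bloch_iff,
    norm3_neg]

lemma le_one_sub_sq_div_two {η : ℝ} (hη : 0 ≤ η) (hη' : η ≤ √3 - 1) : η ≤ 1 - η ^ 2 / 2 := by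
  have h3 : √3 ^ 2 = 3 := Real.sq_sqrt (by norm_num)
  nlinarith [Real.sqrt_nonneg 3]

lemma sq_le_of_pair_constraints {η s x : ℝ} (hx : 0 ≤ x) (hs0 : 0 ≤ s) (hs2 : s ≤ 2)
    (h1 : η ^ 2 + x ≤ s ^ 2) (h2 : 3 * η ^ 2 + x ≤ (2 - s) ^ 2) :
    x ≤ 1 + η ^ 4 / 4 - 2 * η ^ 2 := by
  -- `√(η² + x) + √(3η² + x) ≤ s + (2 - s) = 2`, squared twice
  have hprod : (η ^ 2 + x) * (3 * η ^ 2 + x) ≤ (s * (2 - s)) ^ 2 := by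
    rw [mul_pow]; exact mul_le_mul h1 h2 (by positivity) (sq_nonneg s)
  nlinarith [mul_nonneg hs0 (sub_nonneg.2 hs2)]

lemma sub_le_of_pair_constraints {η s t : ℝ} (hs0 : 0 ≤ s) (hs2 : s ≤ 2)
    (h1 : η ^ 2 + t ^ 2 ≤ s ^ 2) (h2 : 3 * η ^ 2 + t ^ 2 ≤ (2 - s) ^ 2) :
    t - s ≤ √(1 + η ^ 4 / 4 - 2 * η ^ 2) - (1 - η ^ 2 / 2) := by
  have ht0 := sq_le_of_pair_constraints (sq_nonneg t) hs0 hs2 h1 h2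
  set t₀ := √(1 + η ^ 4 / 4 - 2 * η ^ 2)
  have ht₀ : t₀ ^ 2 = 1 + η ^ 4 / 4 - 2 * η ^ 2 := Real.sq_sqrt (by nlinarith)
  have htt₀ : t ≤ t₀ := Real.le_sqrt_of_sq_le ht0
  have hη : η ^ 2 ≤ 2 := by nlinarith
  have ht₀s : t₀ ≤ 1 - η ^ 2 / 2 := by nlinarith [Real.sqrt_nonneg (1 + η ^ 4 / 4 - 2 * η ^ 2)]
  -- `t ↦ t - √(η² + t²)` is increasing, and `1 - η²/2 = √(η² + t₀²)`
  nlinarith [mul_nonneg (sub_nonneg.2 ht₀s) (sub_nonneg.2 htt₀)]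

section PairFamily

variable {η α : ℝ} {ni nj a : Fin 3 → ℝ}

lemma famEffects_iff :
    FamEffects η ni nj α a ↔
      norm3 (η • (ni + nj) - a) ≤ α ∧ norm3 (η • (ni + nj) + a) ≤ α ∧
      norm3 (η • (ni - nj) + a) ≤ 2 - α ∧ norm3 (η • (ni - nj) - a) ≤ 2 - α := by
  have hmp : (1/2 : ℝ) • (-(η • ni) + η • nj + a) = (-(1/2) : ℝ) • (η • (ni - nj) - a) := by
    module
  have hmm : (1/2 : ℝ) • (-(η • (ni + nj)) - a) = (-(1/2) : ℝ) • (η • (ni + nj) + a) := by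
    module
  simp only [FamEffects, Gpp, Gpm, Gmp, Gmm, isEffect_half_bloch_iff, hmp, hmm, norm3_smul]
  rw [abs_neg, abs_of_pos one_half_pos]
  constructor
  · rintro ⟨⟨hpp, -⟩, ⟨hpm, -⟩, ⟨hmp, -⟩, hmm, -⟩
    exact ⟨by linarith, by linarith, by linarith, by linarith⟩
  · rintro ⟨hpp, hmm, hpm, hmp⟩
    have := norm3_nonneg (η • (ni + nj) - a)
    have := norm3_nonneg (η • (ni - nj) + a)
    refine ⟨⟨?_, ?_⟩, ⟨?_, ?_⟩, ⟨?_, ?_⟩, ?_, ?_⟩ <;> linarith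

lemma FamEffects.sq_bounds (h : FamEffects η ni nj α a) :
    0 ≤ α ∧ α ≤ 2 ∧ η ^ 2 * dot3 (ni + nj) (ni + nj) + dot3 a a ≤ α ^ 2 ∧
      η ^ 2 * dot3 (ni - nj) (ni - nj) + dot3 a a ≤ (2 - α) ^ 2 := by
  obtain ⟨hpp, hmm, hpm, hmp⟩ := famEffects_iff.1 h
  rw [norm3_le_iff, dot3_sub_self, dot3_smul_self] at hpp hmp
  rw [norm3_le_iff, dot3_add_self, dot3_smul_self] at hmm hpm
  exact ⟨hpp.1, by linarith [hpm.1], by linarith [hpp.2, hmm.2], by linarith [hpm.2, hmp.2]⟩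

lemma famEffects_of_orthogonal (hu : dot3 (ni + nj) a = 0) (hw : dot3 (ni - nj) a = 0)
    (hα : 0 ≤ α) (hα' : α ≤ 2)
    (h1 : η ^ 2 * dot3 (ni + nj) (ni + nj) + dot3 a a ≤ α ^ 2)
    (h2 : η ^ 2 * dot3 (ni - nj) (ni - nj) + dot3 a a ≤ (2 - α) ^ 2) :
    FamEffects η ni nj α a := by
  obtain ⟨hpp, hmm⟩ := norm3_add_sub_le_of_dot3_eq_zero (x := η • (ni + nj))
    (by rw [dot3_smul_left, hu, mul_zero]) hα (by rwa [dot3_smul_self])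
  obtain ⟨hpm, hmp⟩ := norm3_add_sub_le_of_dot3_eq_zero (x := η • (ni - nj)) (r := 2 - α)
    (by rw [dot3_smul_left, hw, mul_zero]) (by linarith) (by rwa [dot3_smul_self])
  exact famEffects_iff.2 ⟨hmm, hpp, hpm, hmp⟩

lemma FamEffects.norm3_sub_le (hu : dot3 (ni + nj) (ni + nj) = 1)
    (hw : dot3 (ni - nj) (ni - nj) = 3) (h : FamEffects η ni nj α a) :
    norm3 a - α ≤ √(1 + η ^ 4 / 4 - 2 * η ^ 2) - (1 - η ^ 2 / 2) := by
  obtain ⟨hα, hα', h1, h2⟩ := h.sq_bounds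
  rw [hu] at h1
  rw [hw] at h2
  exact sub_le_of_pair_constraints hα hα' (by rw [sq_norm3]; linarith) (by rw [sq_norm3]; linarith)

lemma dot3_aopt (x : Fin 3 → ℝ) : dot3 x (aopt η) = x 1 * √(1 + η ^ 4 / 4 - 2 * η ^ 2) := by
  simp [dot3, aopt]

lemma famEffects_aopt (hη : 0 ≤ η) (hη' : η ≤ 1 - η ^ 2 / 2)
    (hu : dot3 (ni + nj) (ni + nj) = 1) (hw : dot3 (ni - nj) (ni - nj) = 3)
    (hi : ni 1 = 0) (hj : nj 1 = 0) :
    FamEffects η ni nj (αopt η) (aopt η) := by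
  have hT : dot3 (aopt η) (aopt η) = 1 + η ^ 4 / 4 - 2 * η ^ 2 := by
    rw [dot3_aopt]
    simpa [aopt] using Real.mul_self_sqrt (by nlinarith)
  refine famEffects_of_orthogonal (by simp [dot3_aopt, hi, hj]) (by simp [dot3_aopt, hi, hj])
    ?_ ?_ ?_ ?_ <;> simp only [αopt, hu, hw, hT] <;> nlinarith

end PairFamily

lemma dot3_trine_add_self :
    dot3 (tn1 + tn2) (tn1 + tn2) = 1 ∧ dot3 (tn1 + tn3) (tn1 + tn3) = 1 ∧
      dot3 (tn2 + tn3) (tn2 + tn3) = 1 := by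
  have h3 : √3 * √3 = 3 := Real.mul_self_sqrt (by norm_num)
  refine ⟨?_, ?_, ?_⟩ <;> simp [dot3, tn1, tn2, tn3] <;> linarith

lemma dot3_trine_sub_self :
    dot3 (tn1 - tn2) (tn1 - tn2) = 3 ∧ dot3 (tn1 - tn3) (tn1 - tn3) = 3 ∧
      dot3 (tn2 - tn3) (tn2 - tn3) = 3 := by
  have h3 : √3 * √3 = 3 := Real.mul_self_sqrt (by norm_num)
  refine ⟨?_, ?_, ?_⟩ <;> simp [dot3, tn1, tn2, tn3] <;> linarith

/-- For trine axes and η ∈ (2/3, √3 - 1], over all valid parameters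
(α₁₂,a₁₂), (α₁₃,a₁₃), (α₂₃,a₂₃), the quantity 2η + |a₁₂+a₁₃+a₂₃| - (α₁₂+α₁₃+α₂₃)
attains its maximum C(η), at αᵢⱼ = 1 - η²/2 and aᵢⱼ = (0, √(1 + η⁴/4 - 2η²), 0). -/
theorem optimal_violation_trine (η : ℝ) (hη : η ∈ Set.Ioc (2/3 : ℝ) (Real.sqrt 3 - 1)) :
    (∀ (α12 α13 α23 : ℝ) (a12 a13 a23 : Fin 3 → ℝ),
      FamEffects η tn1 tn2 α12 a12 → FamEffects η tn1 tn3 α13 a13 →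
      FamEffects η tn2 tn3 α23 a23 →
      2*η + norm3 (a12 + a13 + a23) - (α12 + α13 + α23) ≤ Cfun η) ∧
    FamEffects η tn1 tn2 (αopt η) (aopt η) ∧
    FamEffects η tn1 tn3 (αopt η) (aopt η) ∧
    FamEffects η tn2 tn3 (αopt η) (aopt η) ∧
    2*η + norm3 (aopt η + aopt η + aopt η) - (αopt η + αopt η + αopt η) = Cfun η := by
  obtain ⟨hu12, hu13, hu23⟩ := dot3_trine_add_self
  obtain ⟨hw12, hw13, hw23⟩ := dot3_trine_sub_self
  have hη0 : 0 ≤ η := by linarith [hη.1]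
  have hη1 := le_one_sub_sq_div_two hη0 hη.2
  refine ⟨fun α12 α13 α23 a12 a13 a23 h12 h13 h23 => ?_,
    famEffects_aopt hη0 hη1 hu12 hw12 (by simp [tn1]) (by simp [tn2]),
    famEffects_aopt hη0 hη1 hu13 hw13 (by simp [tn1]) (by simp [tn3]),
    famEffects_aopt hη0 hη1 hu23 hw23 (by simp [tn2]) (by simp [tn3]), ?_⟩
  · calc 2*η + norm3 (a12 + a13 + a23) - (α12 + α13 + α23)
        ≤ 2*η + (norm3 a12 - α12) + (norm3 a13 - α13) + (norm3 a23 - α23) := by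
          linarith [norm3_add_le (a12 + a13) a23, norm3_add_le a12 a13]
      _ ≤ Cfun η := by
          rw [Cfun]
          linarith [h12.norm3_sub_le hu12 hw12, h13.norm3_sub_le hu13 hw13,
            h23.norm3_sub_le hu23 hw23]
  · have h3a : aopt η + aopt η + aopt η = (3 : ℝ) • aopt η := by module
    have hT : norm3 (aopt η) = √(1 + η ^ 4 / 4 - 2 * η ^ 2) := by
      simp [norm3, dot3, aopt, Real.sqrt_mul_self (Real.sqrt_nonneg _)]
    rw [h3a, norm3_smul, hT, abs_of_pos three_pos, Cfun, αopt]
    ring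
end
end

section
/- Let n₁, …, n_N be unit vectors in ℝ³ and η ∈ [0,1], defining the qubit observables M_k with effects E^k_± = (1/2)(I ± η σ·n_k). For each sign vector X = (X₁,…,X_N) ∈ {+1,−1}^N let m_X := Σ_{k=1}^N X_k n_k ∈ ℝ³. If the observables M₁, …, M_N are jointly measurable, then η ≤ (1/N)·max_{X ∈ {+1,−1}^N} |m_X|. -/
open Matrix ComplexOrder

noncomputable section

/-!
Subtracting the two marginals of a joint measurement `E` gives `∑_X X_k E_X = η σ·n_k`, hence
`∑_X tr(E_X σ·m_X) = ∑_k tr(η (σ·n_k)²) = 2ηN`. On the other hand `|m_X| I - σ·m_X ⪰ 0` and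
`E_X ⪰ 0`, so `tr(E_X σ·m_X) ≤ |m_X| tr E_X ≤ (max_X |m_X|) tr E_X`, and `∑_X tr E_X = tr I = 2`.
-/

lemma pauli_eq (a : Fin 3 → ℝ) :
    pauli a = !![(a 2 : ℂ), (a 0 : ℂ) - (a 1 : ℂ) * Complex.I;
                 (a 0 : ℂ) + (a 1 : ℂ) * Complex.I, -(a 2 : ℂ)] := by
  ext i j
  fin_cases i <;> fin_cases j <;> simp [pauli, σ1, σ2, σ3, sub_eq_add_neg, mul_comm]

lemma pauli_isHermitian (a : Fin 3 → ℝ) : (pauli a).IsHermitian := by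
  rw [pauli_eq]
  ext i j
  fin_cases i <;> fin_cases j <;> simp [Matrix.conjTranspose_apply, Complex.ext_iff]

lemma pauli_mul_pauli_trace (a b : Fin 3 → ℝ) :
    (pauli a * pauli b).trace = ((2 * dot3 a b : ℝ) : ℂ) := by
  rw [pauli_eq, pauli_eq, Matrix.mul_fin_two, Matrix.trace_fin_two_of, dot3]
  push_cast
  linear_combination (-2 * (a 1 : ℂ) * (b 1 : ℂ)) * Complex.I_mul_I

lemma pauli_mul_self (a : Fin 3 → ℝ) : pauli a * pauli a = dot3 a a • (1 : Mat2) := by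
  rw [pauli_eq, Matrix.mul_fin_two, dot3]
  ext i j
  fin_cases i <;> fin_cases j <;> simp <;>
    first | linear_combination (-(a 1 : ℂ) * (a 1 : ℂ)) * Complex.I_mul_I | ring

def pauliLinearMap : (Fin 3 → ℝ) →ₗ[ℝ] Mat2 where
  toFun := pauli
  map_add' a b := by simp only [pauli, Pi.add_apply, Complex.ofReal_add, add_smul]; abel
  map_smul' r a := by
    simp only [pauli, Pi.smul_apply, smul_eq_mul, Complex.ofReal_mul, mul_smul, smul_add,
      Complex.coe_smul, RingHom.id_apply]

lemma pauli_sum_smul {ι : Type*} (s : Finset ι) (c : ι → ℝ) (v : ι → Fin 3 → ℝ) :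
    pauli (∑ i ∈ s, c i • v i) = ∑ i ∈ s, c i • pauli (v i) := by
  change pauliLinearMap _ = _
  simp only [map_sum, map_smul]
  rfl

lemma norm3_mul_self (a : Fin 3 → ℝ) : norm3 a * norm3 a = dot3 a a :=
  Real.mul_self_sqrt (dot3_self_nonneg a)

lemma eq_zero_of_norm3_eq_zero {a : Fin 3 → ℝ} (h : norm3 a = 0) : a = 0 := by
  have hd : dot3 a a = 0 := by rw [← norm3_mul_self, h, zero_mul]
  unfold dot3 at hd
  ext i
  fin_cases i <;> simp <;> nlinarith [sq_nonneg (a 0), sq_nonneg (a 1), sq_nonneg (a 2)]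

lemma Matrix.PosSemidef.trace_mul_nonneg {n 𝕜 : Type*} [Fintype n] [RCLike 𝕜]
    {A B : Matrix n n 𝕜} (hA : A.PosSemidef) (hB : B.PosSemidef) : 0 ≤ (A * B).trace := by
  classical
  open scoped MatrixOrder in
  obtain ⟨C, rfl⟩ := CStarAlgebra.nonneg_iff_eq_star_mul_self.mp hA.nonneg
  rw [Matrix.star_eq_conjTranspose, Matrix.mul_assoc, Matrix.trace_mul_comm]
  exact (hB.mul_mul_conjTranspose_same C).trace_nonneg

lemma Matrix.PosSemidef.of_mul_self_eq_smul {n 𝕜 : Type*} [Fintype n] [RCLike 𝕜]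
    {B : Matrix n n 𝕜} (hB : B.IsHermitian) {c : ℝ} (hc : 0 < c) (h : B * B = c • B) :
    B.PosSemidef := by
  have hB' : B = c⁻¹ • (Bᴴ * B) := by rw [hB.eq, h, smul_smul, inv_mul_cancel₀ hc.ne', one_smul]
  rw [hB']
  exact (posSemidef_conjTranspose_mul_self B).smul (inv_nonneg.mpr hc.le)

lemma posSemidef_norm3_smul_one_sub_pauli (a : Fin 3 → ℝ) :
    (norm3 a • (1 : Mat2) - pauli a).PosSemidef := by
  rcases (Real.sqrt_nonneg _ : 0 ≤ norm3 a).eq_or_lt with h0 | hpos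
  · obtain rfl := eq_zero_of_norm3_eq_zero h0.symm
    simpa [norm3, dot3, pauli] using PosSemidef.zero
  · -- `(σ·a)² = |a|² I` gives `B² = 2|a| B` for `B = |a| I - σ·a`.
    refine .of_mul_self_eq_smul ?_ (by positivity : 0 < 2 * norm3 a) ?_
    · exact (isHermitian_one.smul (.all _)).sub (pauli_isHermitian a)
    · rw [sub_mul, mul_sub, mul_sub, pauli_mul_self, ← norm3_mul_self]
      simp only [smul_mul_assoc, mul_smul_comm, one_mul, mul_one, smul_smul]
      module

lemma re_trace_mul_pauli_le {E : Mat2} (hE : E.PosSemidef) (a : Fin 3 → ℝ) :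
    (E * pauli a).trace.re ≤ norm3 a * E.trace.re := by
  have h := (hE.trace_mul_nonneg (posSemidef_norm3_smul_one_sub_pauli a)).1
  rw [mul_sub, mul_smul_comm, mul_one, Matrix.trace_sub, Matrix.trace_smul] at h
  simpa using h

lemma sum_sgn_smul {ι M : Type*} [Fintype ι] [DecidableEq ι] [AddCommGroup M] [Module ℝ M]
    (f : (ι → Bool) → M) (k : ι) :
    ∑ X, sgn (X k) • f X = ∑ X with X k = true, f X - ∑ X with X k = false, f X := by
  simp only [sgn, ite_smul, one_smul, neg_smul, Finset.sum_ite, Finset.sum_neg_distrib,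
    Bool.not_eq_true, sub_eq_add_neg]

lemma Epos_sub_Eneg (η : ℝ) (n : Fin 3 → ℝ) : Epos η n - Eneg η n = η • pauli n := by
  rw [Epos, Eneg, ← Complex.coe_smul]
  module

lemma sum_trace_mul_pauli_mvec {N : ℕ} (E : (Fin N → Bool) → Mat2) (n : Fin N → Fin 3 → ℝ) :
    ∑ X, (E X * pauli (mvec n X)).trace = ∑ k, ((∑ X, sgn (X k) • E X) * pauli (n k)).trace := by
  simp only [mvec, pauli_sum_smul, Matrix.mul_sum, Matrix.sum_mul, Matrix.trace_sum,
    mul_smul_comm, smul_mul_assoc, Matrix.trace_smul]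
  exact Finset.sum_comm

lemma sum_re_trace_mul_pauli_mvec_of_marginals {N : ℕ} {η : ℝ} {n : Fin N → Fin 3 → ℝ}
    {E : (Fin N → Bool) → Mat2}
    (hpos : ∀ k, ∑ X ∈ Finset.univ.filter (fun X => X k = true), E X = Epos η (n k))
    (hneg : ∀ k, ∑ X ∈ Finset.univ.filter (fun X => X k = false), E X = Eneg η (n k)) :
    ∑ X, (E X * pauli (mvec n X)).trace.re = 2 * η * ∑ k, dot3 (n k) (n k) := by
  rw [← Complex.re_sum, sum_trace_mul_pauli_mvec, Complex.re_sum, Finset.mul_sum]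
  refine Finset.sum_congr rfl fun k _ => ?_
  rw [sum_sgn_smul, hpos, hneg, Epos_sub_Eneg, smul_mul_assoc, Matrix.trace_smul,
    pauli_mul_pauli_trace, Complex.smul_re, Complex.ofReal_re, smul_eq_mul]
  ring

theorem joint_measurability_necessary_general {N : ℕ} (hN : 0 < N)
    (n : Fin N → Fin 3 → ℝ) (hn : ∀ k, norm3 (n k) = 1)
    (η : ℝ)
    (h : JointlyMeasurable η n) :
    η ≤ (1 / N) *
      Finset.univ.sup' Finset.univ_nonempty (fun X : Fin N → Bool => norm3 (mvec n X)) := by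
  obtain ⟨E, hE, hsum, hpos, hneg⟩ := h
  set M := Finset.univ.sup' Finset.univ_nonempty (fun X : Fin N → Bool => norm3 (mvec n X))
  have hcorr : ∑ X, (E X * pauli (mvec n X)).trace.re = 2 * η * N := by
    simp [sum_re_trace_mul_pauli_mvec_of_marginals hpos hneg, ← norm3_mul_self, hn]
  have htrace : ∑ X, (E X).trace.re = 2 := by
    rw [← Complex.re_sum, ← Matrix.trace_sum, hsum, Matrix.trace_one]
    simp
  have hbound : 2 * η * N ≤ M * 2 := calc
    2 * η * N = ∑ X, (E X * pauli (mvec n X)).trace.re := hcorr.symm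
    _ ≤ ∑ X, M * (E X).trace.re := Finset.sum_le_sum fun X _ =>
      (re_trace_mul_pauli_le (hE X).1 _).trans <| mul_le_mul_of_nonneg_right
        (Finset.le_sup' (fun X => norm3 (mvec n X)) (Finset.mem_univ X)) (hE X).1.trace_nonneg.1
    _ = M * 2 := by rw [← Finset.mul_sum, htrace]
  rw [one_div, inv_mul_eq_div, le_div_iff₀ (by exact_mod_cast hN)]
  linarith

/-- Necessary condition for joint measurability of N noisy spin-1/2 qubit observables:
η ≤ (1/N) · max_X |m_X|. -/
theorem joint_measurability_necessary {N : ℕ} (hN : 0 < N)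
    (n : Fin N → Fin 3 → ℝ) (hn : ∀ k, norm3 (n k) = 1)
    (η : ℝ) (hη : η ∈ Set.Icc (0 : ℝ) 1)
    (h : JointlyMeasurable η n) :
    η ≤ (1 / N) *
      Finset.univ.sup' Finset.univ_nonempty (fun X : Fin N → Bool => norm3 (mvec n X)) :=
  joint_measurability_necessary_general hN n hn η h
end
end
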